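/- Let Σ be a finite nonempty alphabet and let L ⊆ ℬ^Σ be a regular tree language with P_lim(L) = 0. Then there exists a tree S ∈ ℬ^Σ such that {T ∈ ℬ^Σ : S ⪯ T} ∩ L = ∅, i.e. S is a forbidden subtree for L. -/

import Mathlib

open Filter Topology

namespace Sparse

inductive BTree (α : Type*) where
  | nil : BTree α
  | node : α → BTree α → BTree α → BTree α

namespace BTree

variable {α : Type*}

/-- The number of nodes of a binary tree. -/
def size : BTree α → ℕ
  | nil => 0
  | node _ l r => size l + size r + 1

/-- `Subtree S T` means `S = T`, or `T` is nonempty and `S` is a subtree of the left or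
right subtree of the root of `T`. -/
inductive Subtree : BTree α → BTree α → Prop where
  | refl (T : BTree α) : Subtree T T
  | left {S l r : BTree α} {a : α} : Subtree S l → Subtree S (node a l r)
  | right {S l r : BTree α} {a : α} : Subtree S r → Subtree S (node a l r)

end BTree

variable {α : Type*}

/-- A run of a tree automaton with transition relation `Δ` on a binary tree: the empty tree is
assigned `none` (i.e. `⊥`), and a nonempty tree with root label `a` and run values `ql`, `qr` on
the two subtrees is assigned a state `q` with `(ql, qr, a, q) ∈ Δ`. -/
inductive Run {Q : Type*} (Δ : Option Q → Option Q → α → Q → Prop) :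
    BTree α → Option Q → Prop where
  | nil : Run Δ BTree.nil none
  | node {a : α} {l r : BTree α} {ql qr : Option Q} {q : Q} :
      Run Δ l ql → Run Δ r qr → Δ ql qr a q → Run Δ (BTree.node a l r) (some q)

/-- A tree automaton with transitions `Δ` and accepting states `F` accepts `T` if some run
assigns `T` a state in `F`. -/
def TAccepts {Q : Type*} (Δ : Option Q → Option Q → α → Q → Prop) (F : Set Q)
    (T : BTree α) : Prop :=
  ∃ q ∈ F, Run Δ T (some q)

/-- A tree language is regular iff it is the set of trees accepted by some tree automaton
with finitely many states. -/
def RegularTreeLang (L : Set (BTree α)) : Prop :=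
  ∃ (Q : Type) (_ : Fintype Q) (Δ : Option Q → Option Q → α → Q → Prop) (F : Set Q),
    L = {T | TAccepts Δ F T}

/-- The relative number of `n`-node trees in `L`:
`|L ∩ ℬ^Σ_n| / (C_n ⬝ |Σ|^n)`, where `C_n` is the `n`-th Catalan number. -/
noncomputable def density [Fintype α] (L : Set (BTree α)) (n : ℕ) : ℝ :=
  (Nat.card {T : BTree α // T ∈ L ∧ T.size = n} : ℝ) /
    ((catalan n : ℝ) * (Fintype.card α : ℝ) ^ n)

/-- `L` has asymptotic density `c` if `density L n` tends to `c` as `n → ∞`. -/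
def HasDensity [Fintype α] (L : Set (BTree α)) (c : ℝ) : Prop :=
  Tendsto (density L) atTop (𝓝 c)

/-- The upper asymptotic density `P̄_lim(L) = limsup_n density L n`. -/
noncomputable def upperDensity [Fintype α] (L : Set (BTree α)) : ℝ :=
  limsup (density L) atTop

/-- `LT = {conc_a(S, T) : a ∈ Σ, S ∈ L}`. -/
def concL (L : Set (BTree α)) (T : BTree α) : Set (BTree α) :=
  {X | ∃ (a : α) (S : BTree α), S ∈ L ∧ X = BTree.node a S T}

/-- `LT⁻¹ = {S : ∃ a, conc_a(S, T) ∈ L}`. -/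
def quotR (L : Set (BTree α)) (T : BTree α) : Set (BTree α) :=
  {S | ∃ a : α, BTree.node a S T ∈ L}

/-- `T⁻¹L = {S : ∃ a, conc_a(T, S) ∈ L}`. -/
def quotL (T : BTree α) (L : Set (BTree α)) : Set (BTree α) :=
  {S | ∃ a : α, BTree.node a T S ∈ L}

/-- `L[T_k, …, T_1]⁻¹`, where the list is `[T_k, …, T_1]` (so the head is `T_k`):
`L[]⁻¹ = L` and `L[T_k,…,T_1]⁻¹ = (L[T_{k-1},…,T_1]⁻¹)T_k⁻¹ ∪ T_k⁻¹(L[T_{k-1},…,T_1]⁻¹)`. -/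
def quotIter (L : Set (BTree α)) : List (BTree α) → Set (BTree α)
  | [] => L
  | T :: Ts => quotR (quotIter L Ts) T ∪ quotL T (quotIter L Ts)

/-- A state `q` is reachable if some run of the automaton on some tree assigns `q` to the tree. -/
def TReachable {Q : Type*} (Δ : Option Q → Option Q → α → Q → Prop) (q : Q) : Prop :=
  ∃ T : BTree α, Run Δ T (some q)

/-- A set of states `V` is a sink if every transition involving a state of `V` as one of the
two child values leads into `V`. -/
def Sink {Q : Type*} (Δ : Option Q → Option Q → α → Q → Prop) (V : Set Q) : Prop :=
  ∀ q ∈ V, ∀ (q' : Option Q) (a : α) (q'' : Q),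
    (Δ (some q) q' a q'' ∨ Δ q' (some q) a q'') → q'' ∈ V

/-! `quotR M T` and `quotL T M` have at most `|Σ|` times as many trees with `n` nodes as `M` has
with `n + |T| + 1` nodes, and there are at most `(4|Σ|)^k` times as many trees with `n + k` nodes
as with `n` nodes; hence every iterated quotient `quotIter L Ts` of a language of density `0`
has density `0`. When `L` is recognised by a finite tree automaton, membership of a tree in any
iterated quotient depends only on the set of states the automaton can reach on it, so there are
only finitely many iterated quotients, and they cannot cover all trees, which have density `1`.
A tree lying in none of them is a forbidden subtree. -/

theorem catalan_pos (n : ℕ) : 0 < catalan n :=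
  Nat.pos_of_mul_pos_left (succ_mul_catalan_eq_centralBinom n ▸ n.centralBinom_pos)

theorem catalan_succ_le (n : ℕ) : catalan (n + 1) ≤ 4 * catalan n := by
  have hrec : (n + 1) * ((n + 2) * catalan (n + 1)) = (n + 1) * ((4 * n + 2) * catalan n) := by
    rw [succ_mul_catalan_eq_centralBinom (n + 1), Nat.succ_mul_centralBinom_succ,
      ← succ_mul_catalan_eq_centralBinom n]
    ring
  refine Nat.le_of_mul_le_mul_left (c := n + 2) ?_ (by omega)
  rw [Nat.eq_of_mul_eq_mul_left n.succ_pos hrec]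
  nlinarith

theorem catalan_add_le (n k : ℕ) : catalan (n + k) ≤ 4 ^ k * catalan n := by
  induction k with
  | zero => simp
  | succ k ih =>
    calc catalan (n + k + 1) ≤ 4 * catalan (n + k) := catalan_succ_le _
      _ ≤ 4 * (4 ^ k * catalan n) := Nat.mul_le_mul_left 4 ih
      _ = 4 ^ (k + 1) * catalan n := by ring

theorem catalan_mul_pow_add_le {a : ℝ} (ha : 0 ≤ a) (n k : ℕ) :
    catalan (n + k) * a ^ (n + k) ≤ (4 * a) ^ k * (catalan n * a ^ n) := by
  have hcat : (catalan (n + k) : ℝ) ≤ 4 ^ k * catalan n := by exact_mod_cast catalan_add_le n k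
  calc (catalan (n + k) : ℝ) * a ^ (n + k) ≤ 4 ^ k * catalan n * (a ^ n * a ^ k) := by
        rw [pow_add]; gcongr
    _ = (4 * a) ^ k * (catalan n * a ^ n) := by ring

namespace BTree

theorem size_eq_zero_iff {T : BTree α} : T.size = 0 ↔ T = nil := by
  cases T <;> simp [size]

instance : Unique {T : BTree α // T.size = 0} where
  default := ⟨nil, rfl⟩
  uniq T := Subtype.ext (size_eq_zero_iff.mp T.2)

def sizeSuccEquiv (n : ℕ) :
    {T : BTree α // T.size = n + 1} ≃
      α × Σ i : Fin (n + 1),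
        {l : BTree α // l.size = i} × {r : BTree α // r.size = n - i} where
  toFun
    | ⟨node a l r, hT⟩ =>
      (a, ⟨⟨l.size, by simp only [size] at hT; omega⟩, ⟨l, rfl⟩,
        ⟨r, show r.size = n - l.size by simp only [size] at hT; omega⟩⟩)
  invFun
    | (a, ⟨i, ⟨l, hl⟩, ⟨r, hr⟩⟩) => ⟨node a l r, by simp only [size]; omega⟩
  left_inv
    | ⟨node _ _ _, _⟩ => rfl
  right_inv
    | (a, ⟨⟨_, _⟩, ⟨l, rfl⟩, ⟨r, _⟩⟩) => rfl

variable [Fintype α]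

instance finite_size (n : ℕ) : Finite {T : BTree α // T.size = n} := by
  induction n using Nat.strong_induction_on with
  | _ n ih =>
    cases n with
    | zero => infer_instance
    | succ n =>
      have : ∀ i : Fin (n + 1), Finite {T : BTree α // T.size = i} := fun i => ih _ i.2
      have : ∀ i : Fin (n + 1), Finite {T : BTree α // T.size = n - i} :=
        fun i => ih _ (by omega)
      exact Finite.of_equiv _ (sizeSuccEquiv n).symm

theorem card_size (n : ℕ) :
    Nat.card {T : BTree α // T.size = n} = catalan n * Fintype.card α ^ n := by
  induction n using Nat.strong_induction_on with
  | _ n ih =>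
    cases n with
    | zero => simp
    | succ n =>
      rw [Nat.card_congr (sizeSuccEquiv n), Nat.card_prod, Nat.card_sigma,
        Nat.card_eq_fintype_card, catalan_succ, Finset.sum_mul, Finset.mul_sum]
      refine Finset.sum_congr rfl fun i _ => ?_
      have hpow : Fintype.card α ^ (i : ℕ) * Fintype.card α ^ (n - i) * Fintype.card α =
          Fintype.card α ^ (n + 1) := by
        rw [← pow_add, ← pow_succ, Nat.add_sub_cancel' (Nat.lt_succ_iff.mp i.2)]
      rw [Nat.card_prod, ih i (by omega), ih (n - i) (by omega), ← hpow]
      ring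

end BTree

theorem card_mem_union_size_le (A B : Set (BTree α)) (n : ℕ) :
    Nat.card {T : BTree α // T ∈ A ∪ B ∧ T.size = n} ≤
      Nat.card {T : BTree α // T ∈ A ∧ T.size = n} +
        Nat.card {T : BTree α // T ∈ B ∧ T.size = n} := by
  have h := Set.ncard_union_le (A ∩ {T | T.size = n}) (B ∩ {T | T.size = n})
  rwa [← Set.union_inter_distrib_right] at h

section Density

variable [Fintype α]

instance finite_mem_size (L : Set (BTree α)) (n : ℕ) :
    Finite {T : BTree α // T ∈ L ∧ T.size = n} :=
  Finite.of_injective (fun T => (⟨T.1, T.2.2⟩ : {T : BTree α // T.size = n}))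
    fun _ _ h => Subtype.ext (Subtype.mk.inj h)

theorem density_nonneg (L : Set (BTree α)) (n : ℕ) : 0 ≤ density L n := by
  unfold density; positivity

theorem density_univ [Nonempty α] (n : ℕ) : density (Set.univ : Set (BTree α)) n = 1 := by
  have hpos : (0 : ℝ) < catalan n * Fintype.card α ^ n := by
    have := catalan_pos n; positivity
  unfold density
  rw [Nat.card_congr (Equiv.subtypeEquivRight (q := fun T : BTree α => T.size = n)
    fun T => by simp), BTree.card_size]
  push_cast
  exact div_self hpos.ne'

theorem not_hasDensity_univ_zero [Nonempty α] : ¬ HasDensity (Set.univ : Set (BTree α)) 0 := by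
  rw [HasDensity, funext density_univ, tendsto_const_nhds_iff]
  exact one_ne_zero

theorem hasDensity_empty : HasDensity (∅ : Set (BTree α)) 0 := by
  have : density (∅ : Set (BTree α)) = 0 := funext fun n => by simp [density]
  rw [HasDensity, this]
  exact tendsto_const_nhds

theorem density_union_le (A B : Set (BTree α)) (n : ℕ) :
    density (A ∪ B) n ≤ density A n + density B n := by
  unfold density
  rw [← add_div]
  gcongr
  exact_mod_cast card_mem_union_size_le A B n

theorem HasDensity.union {A B : Set (BTree α)} (hA : HasDensity A 0) (hB : HasDensity B 0) :
    HasDensity (A ∪ B) 0 :=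
  squeeze_zero (density_nonneg _) (density_union_le A B) (by simpa using hA.add hB)

theorem hasDensity_sUnion {𝓜 : Set (Set (BTree α))} (h𝓜 : 𝓜.Finite)
    (h : ∀ M ∈ 𝓜, HasDensity M 0) : HasDensity (⋃₀ 𝓜) 0 := by
  induction 𝓜, h𝓜 using Set.Finite.induction_on with
  | empty => simpa using hasDensity_empty
  | @insert M 𝓜 _ _ ih =>
    rw [Set.sUnion_insert]
    exact (h M (Set.mem_insert _ _)).union (ih fun N hN => h N (Set.mem_insert_of_mem _ hN))

theorem density_le_of_card_le [Nonempty α] {M N : Set (BTree α)} {C k : ℕ}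
    (h : ∀ n, Nat.card {T : BTree α // T ∈ N ∧ T.size = n} ≤
      C * Nat.card {T : BTree α // T ∈ M ∧ T.size = n + k}) (n : ℕ) :
    density N n ≤ C * (4 * Fintype.card α) ^ k * density M (n + k) := by
  set a : ℝ := (Fintype.card α : ℝ)
  have hpos : ∀ m, (0 : ℝ) < catalan m * a ^ m := fun m => by
    have := catalan_pos m; positivity
  unfold density
  rw [div_le_iff₀ (hpos n)]
  set cM : ℝ := ((Nat.card {T : BTree α // T ∈ M ∧ T.size = n + k} : ℕ) : ℝ) with hcM
  calc (Nat.card {T : BTree α // T ∈ N ∧ T.size = n} : ℝ) ≤ C * cM := by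
        rw [hcM]; exact_mod_cast h n
    _ = C * (cM / (catalan (n + k) * a ^ (n + k))) * (catalan (n + k) * a ^ (n + k)) := by
      rw [mul_assoc, div_mul_cancel₀ _ (hpos _).ne']
    _ ≤ C * (cM / (catalan (n + k) * a ^ (n + k))) * ((4 * a) ^ k * (catalan n * a ^ n)) :=
      mul_le_mul_of_nonneg_left (catalan_mul_pow_add_le (Nat.cast_nonneg _) n k) (by positivity)
    _ = _ := by ring

theorem HasDensity.of_card_le [Nonempty α] {M N : Set (BTree α)} (hM : HasDensity M 0) {C k : ℕ}
    (h : ∀ n, Nat.card {T : BTree α // T ∈ N ∧ T.size = n} ≤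
      C * Nat.card {T : BTree α // T ∈ M ∧ T.size = n + k}) :
    HasDensity N 0 :=
  squeeze_zero (density_nonneg _) (density_le_of_card_le h)
    (by simpa using (hM.comp (tendsto_add_atTop_nat k)).const_mul _)

theorem card_exists_mem_size_le (M : Set (BTree α)) {f : α → BTree α → BTree α} {k : ℕ}
    (hf : ∀ a, Function.Injective (f a)) (hsize : ∀ a S, (f a S).size = S.size + k) (n : ℕ) :
    Nat.card {S : BTree α // S ∈ {S | ∃ a, f a S ∈ M} ∧ S.size = n} ≤
      Fintype.card α * Nat.card {T : BTree α // T ∈ M ∧ T.size = n + k} := by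
  classical
  rw [← Nat.card_eq_fintype_card, ← Nat.card_prod]
  refine Nat.card_le_card_of_injective
    (fun S => (S.2.1.choose, ⟨f _ S.1, S.2.1.choose_spec, by rw [hsize, S.2.2]⟩)) ?_
  intro S S' h
  have ha : S.2.1.choose = S'.2.1.choose := congrArg Prod.fst h
  have hf' : f S.2.1.choose S.1 = f S'.2.1.choose S'.1 := congrArg (fun p => p.2.1) h
  rw [ha] at hf'
  exact Subtype.ext (hf _ hf')

theorem HasDensity.quotR [Nonempty α] {M : Set (BTree α)} (hM : HasDensity M 0) (T : BTree α) :
    HasDensity (quotR M T) 0 :=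
  hM.of_card_le (card_exists_mem_size_le M (k := T.size + 1)
    (fun _ _ _ h => (BTree.node.inj h).2.1) (fun _ S => by simp only [BTree.size]; omega))

theorem HasDensity.quotL [Nonempty α] {M : Set (BTree α)} (hM : HasDensity M 0) (T : BTree α) :
    HasDensity (quotL T M) 0 :=
  hM.of_card_le (card_exists_mem_size_le M (k := T.size + 1)
    (fun _ _ _ h => (BTree.node.inj h).2.2) (fun _ S => by simp only [BTree.size]; omega))

theorem HasDensity.quotIter [Nonempty α] {L : Set (BTree α)} (hL : HasDensity L 0)
    (Ts : List (BTree α)) : HasDensity (quotIter L Ts) 0 := by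
  induction Ts with
  | nil => exact hL
  | cons T Ts ih => exact (ih.quotR T).union (ih.quotL T)

end Density

section Saturation

variable {Q : Type*} (Δ : Option Q → Option Q → α → Q → Prop)

def runValues (T : BTree α) : Set (Option Q) :=
  {v | Run Δ T v}

theorem run_node_iff {a : α} {l r : BTree α} {v : Option Q} :
    Run Δ (.node a l r) v ↔
      ∃ q ql qr, v = some q ∧ Run Δ l ql ∧ Run Δ r qr ∧ Δ ql qr a q := by
  constructor
  · rintro (_ | ⟨hl, hr, hΔ⟩)
    exact ⟨_, _, _, rfl, hl, hr, hΔ⟩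
  · rintro ⟨q, ql, qr, rfl, hl, hr, hΔ⟩
    exact .node hl hr hΔ

theorem runValues_node_congr {a : α} {l l' r r' : BTree α}
    (hl : runValues Δ l = runValues Δ l') (hr : runValues Δ r = runValues Δ r') :
    runValues Δ (.node a l r) = runValues Δ (.node a l' r') := by
  ext v
  simp only [runValues, Set.ext_iff, Set.mem_ofPred_eq] at hl hr ⊢
  simp only [run_node_iff, hl, hr]

def RunSaturated (M : Set (BTree α)) : Prop :=
  ∀ ⦃S S' : BTree α⦄, runValues Δ S = runValues Δ S' → S ∈ M → S' ∈ M

variable {Δ}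

theorem runSaturated_accepts (F : Set Q) : RunSaturated Δ {T | TAccepts Δ F T} :=
  fun _ _ h ⟨q, hq, hrun⟩ => ⟨q, hq, show some q ∈ runValues Δ _ from h ▸ hrun⟩

namespace RunSaturated

variable {M : Set (BTree α)}

theorem quotR (hM : RunSaturated Δ M) (T : BTree α) : RunSaturated Δ (Sparse.quotR M T) :=
  fun _ _ h ⟨a, ha⟩ => ⟨a, hM (runValues_node_congr Δ h rfl) ha⟩

theorem quotL (hM : RunSaturated Δ M) (T : BTree α) : RunSaturated Δ (Sparse.quotL T M) :=
  fun _ _ h ⟨a, ha⟩ => ⟨a, hM (runValues_node_congr Δ rfl h) ha⟩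

theorem quotIter (hM : RunSaturated Δ M) (Ts : List (BTree α)) :
    RunSaturated Δ (Sparse.quotIter M Ts) := by
  induction Ts with
  | nil => exact hM
  | cons T Ts ih => exact fun _ _ h hS => hS.imp (ih.quotR T h) (ih.quotL T h)

theorem preimage_image_eq (hM : RunSaturated Δ M) :
    runValues Δ ⁻¹' (runValues Δ '' M) = M :=
  Set.Subset.antisymm (fun _ ⟨_, hS, h⟩ => hM h hS) (Set.subset_preimage_image _ _)

theorem finite_range_quotIter [Finite Q] (hM : RunSaturated Δ M) :
    (Set.range (Sparse.quotIter M)).Finite :=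
  (Set.finite_range fun B => runValues Δ ⁻¹' B).subset
    (Set.range_subset_iff.mpr fun Ts => ⟨_, (hM.quotIter Ts).preimage_image_eq⟩)

end RunSaturated

end Saturation

theorem exists_forall_notMem_quotIter [Fintype α] [Nonempty α] {L : Set (BTree α)}
    (hL : RegularTreeLang L) (h0 : HasDensity L 0) : ∃ S, ∀ Ts, S ∉ quotIter L Ts := by
  obtain ⟨Q, _, Δ, F, rfl⟩ := hL
  by_contra! hcover
  have huniv : ⋃₀ Set.range (quotIter {T | TAccepts Δ F T}) = Set.univ :=
    Set.eq_univ_of_forall fun S => (hcover S).elim fun Ts hS => ⟨_, ⟨Ts, rfl⟩, hS⟩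
  refine not_hasDensity_univ_zero (huniv ▸ hasDensity_sUnion ?_ ?_)
  · exact (runSaturated_accepts F).finite_range_quotIter
  · rintro _ ⟨Ts, rfl⟩
    exact h0.quotIter Ts

theorem BTree.Subtree.notMem_quotIter {L : Set (BTree α)} {S T : BTree α} (hST : Subtree S T)
    (hS : ∀ Ts, S ∉ quotIter L Ts) (Ts : List (BTree α)) : T ∉ quotIter L Ts := by
  induction hST generalizing Ts with
  | refl => exact hS Ts
  | @left _ r a _ ih => exact fun hT => ih (r :: Ts) (.inl ⟨a, hT⟩)
  | @right l _ a _ ih => exact fun hT => ih (l :: Ts) (.inr ⟨a, hT⟩)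

/-- A regular tree language of asymptotic density 0 has a forbidden subtree. -/
theorem forbidden_subtree_of_sparse_regular {α : Type*} [Fintype α] [Nonempty α]
    (L : Set (BTree α)) (hL : RegularTreeLang L) (h0 : HasDensity L 0) :
    ∃ S : BTree α, {T : BTree α | BTree.Subtree S T} ∩ L = ∅ := by
  obtain ⟨S, hS⟩ := exists_forall_notMem_quotIter hL h0
  exact ⟨S, Set.eq_empty_of_forall_notMem fun T ⟨hST, hT⟩ => hST.notMem_quotIter hS [] hT⟩

end Sparse
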